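/- For all λ > 0, 4λ² ∫₀^∞ ∫₀^∞ ∫₀^∞ λπ ĥ(t,h₁,h₂)² e^{−λπ ĥ(t,h₁,h₂)²} dt dh₁ dh₂ = 6√λ / π, where ĥ(t,h₁,h₂)² := (1/4)[ t² + 2(h₁² + h₂²) + (h₂² − h₁²)²/t² ]. This triple integral is the intensity λ_{I'} of the tropical-interference handover point process, i.e. the handover frequency in the 2-Voronoi tessellation of a planar Poisson point process of intensity λ. -/

import Mathlib

/-!
Write `ĥ² = (t - a/t)²/4 + M²` with `a = |h₂² - h₁²|` and `M = max h₁ h₂`. The map `t ↦ t - a/t`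
sends `(0, ∞)` onto `ℝ` and the reflection `t ↦ a/t` reverses its sign, so for even integrable `g`
the Cauchy–Schlömilch transformation gives `∫₀^∞ g(t - a/t) dt = ∫₀^∞ g(u) du`; this turns the
`t`-integral into a combination `K(M)` of Gaussian moments. Splitting the `h₁`-integral at `h₂` and
exchanging the order of integration in the tail gives `∫∫ K(max h₁ h₂) = 2 ∫₀^∞ m K(m) dm`, again a
combination of Gaussian moments.
-/

open MeasureTheory Set Real

section GaussianMoments

variable {b : ℝ}

lemma integral_Ioi_pow_mul_exp_neg_mul_sq (hb : 0 < b) (n : ℕ) :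
    ∫ x in Ioi (0:ℝ), x ^ n * exp (-b * x ^ 2) =
      Gamma ((n + 1) / 2) / (2 * b ^ (((n:ℝ) + 1) / 2)) := by
  have h := integral_rpow_mul_exp_neg_mul_rpow two_pos
    (by linarith [n.cast_nonneg (α := ℝ)] : (-1:ℝ) < n) hb
  simp only [rpow_two, rpow_natCast] at h
  rw [h, neg_div, rpow_neg hb.le]
  field_simp

lemma integrableOn_Ioi_pow_mul_exp_neg_mul_sq (hb : 0 < b) (n : ℕ) :
    IntegrableOn (fun x : ℝ => x ^ n * exp (-b * x ^ 2)) (Ioi 0) := by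
  simpa only [rpow_natCast] using
    integrableOn_rpow_mul_exp_neg_mul_sq hb (by linarith [n.cast_nonneg (α := ℝ)] : (-1:ℝ) < n)

lemma integral_Ioi_mul_exp_neg_mul_sq (hb : 0 < b) :
    ∫ x in Ioi (0:ℝ), x * exp (-b * x ^ 2) = 1 / (2 * b) := by
  simpa using integral_Ioi_pow_mul_exp_neg_mul_sq hb 1

lemma integral_Ioi_sq_mul_exp_neg_mul_sq (hb : 0 < b) :
    ∫ x in Ioi (0:ℝ), x ^ 2 * exp (-b * x ^ 2) = √π / (4 * b * √b) := by
  rw [integral_Ioi_pow_mul_exp_neg_mul_sq hb 2, show ((2:ℕ) + 1 : ℝ) / 2 = 1 / 2 + 1 by norm_num,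
    Gamma_add_one one_half_pos.ne', Gamma_one_half_eq, rpow_add hb, rpow_one, ← sqrt_eq_rpow]
  ring

lemma integral_Ioi_pow_three_mul_exp_neg_mul_sq (hb : 0 < b) :
    ∫ x in Ioi (0:ℝ), x ^ 3 * exp (-b * x ^ 2) = 1 / (2 * b ^ 2) := by
  rw [integral_Ioi_pow_mul_exp_neg_mul_sq hb 3]
  norm_num

end GaussianMoments

lemma integral_eq_two_mul_integral_Ioi_of_even {g : ℝ → ℝ} (hg_even : ∀ u, g (-u) = g u) :
    ∫ u, g u = 2 * ∫ u in Ioi 0, g u := by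
  rw [← integral_comp_abs]
  congr with u
  rcases abs_choice u with h | h <;> rw [h]
  exact (hg_even u).symm

section CauchySchlomilch

variable {a : ℝ}

lemma strictMonoOn_sub_div (ha : 0 ≤ a) : StrictMonoOn (fun t : ℝ => t - a / t) (Ioi 0) := by
  intro t ht s _ hts
  have : a / s ≤ a / t := div_le_div_of_nonneg_left ha ht hts.le
  dsimp only
  linarith

lemma hasDerivAt_const_div (a : ℝ) {t : ℝ} (ht : t ≠ 0) :
    HasDerivAt (fun t : ℝ => a / t) (-(a / t ^ 2)) t := by
  simpa only [← div_eq_mul_inv, mul_neg] using (hasDerivAt_inv ht).const_mul a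

lemma hasDerivAt_sub_div (a : ℝ) {t : ℝ} (ht : t ≠ 0) :
    HasDerivAt (fun t : ℝ => t - a / t) (1 + a / t ^ 2) t := by
  simpa only [sub_neg_eq_add] using (hasDerivAt_id' t).fun_sub (hasDerivAt_const_div a ht)

lemma image_sub_div_Ioi (ha : 0 < a) : (fun t : ℝ => t - a / t) '' Ioi 0 = univ := by
  refine eq_univ_of_forall fun u => ?_
  have hroot : √(u ^ 2 + 4 * a) ^ 2 = u ^ 2 + 4 * a := sq_sqrt (by positivity)
  have hlt : |u| < √(u ^ 2 + 4 * a) := by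
    rw [← sqrt_sq_eq_abs]
    exact sqrt_lt_sqrt (sq_nonneg u) (by linarith)
  have hpos : 0 < (u + √(u ^ 2 + 4 * a)) / 2 := by linarith [neg_abs_le u]
  refine ⟨(u + √(u ^ 2 + 4 * a)) / 2, hpos, ?_⟩
  have hne : u + √(u ^ 2 + 4 * a) ≠ 0 := by linarith
  dsimp only
  field_simp
  linear_combination hroot

lemma image_const_div_Ioi (ha : 0 < a) : (fun t : ℝ => a / t) '' Ioi 0 = Ioi 0 := by
  ext y
  refine ⟨?_, fun hy => ⟨a / y, div_pos ha hy, div_div_cancel₀ ha.ne'⟩⟩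
  rintro ⟨t, ht, rfl⟩
  exact div_pos ha ht

variable {g : ℝ → ℝ}

lemma one_le_one_add_div_sq (ha : 0 ≤ a) (t : ℝ) : 1 ≤ 1 + a / t ^ 2 :=
  le_add_of_nonneg_right (div_nonneg ha (sq_nonneg t))

lemma abs_one_add_div_sq (ha : 0 ≤ a) (t : ℝ) : |1 + a / t ^ 2| = 1 + a / t ^ 2 :=
  abs_of_nonneg (zero_le_one.trans (one_le_one_add_div_sq ha t))

lemma integrableOn_one_add_div_sq_mul_comp_sub_div (hg_int : Integrable g) (ha : 0 < a) :
    IntegrableOn (fun t => (1 + a / t ^ 2) * g (t - a / t)) (Ioi 0) := by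
  have h := (integrableOn_image_iff_integrableOn_abs_deriv_smul measurableSet_Ioi
    (fun t ht => (hasDerivAt_sub_div a (ne_of_gt ht)).hasDerivWithinAt)
    (strictMonoOn_sub_div ha.le).injOn g).1
    (by rw [image_sub_div_Ioi ha]; exact hg_int.integrableOn)
  exact h.congr_fun (fun t _ => by simp only [smul_eq_mul, abs_one_add_div_sq ha.le t])
    measurableSet_Ioi

lemma integral_eq_integral_Ioi_one_add_div_sq_mul_comp_sub_div (ha : 0 < a) :
    ∫ u, g u = ∫ t in Ioi 0, (1 + a / t ^ 2) * g (t - a / t) := by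
  rw [← setIntegral_univ, ← image_sub_div_Ioi ha,
    integral_image_eq_integral_abs_deriv_smul measurableSet_Ioi
      (fun t ht => (hasDerivAt_sub_div a (ne_of_gt ht)).hasDerivWithinAt)
      (strictMonoOn_sub_div ha.le).injOn]
  exact setIntegral_congr_fun measurableSet_Ioi fun t _ => by
    rw [smul_eq_mul, abs_one_add_div_sq ha.le t]

lemma integrableOn_comp_sub_div (hg : Continuous g) (hg_int : Integrable g) (ha : 0 < a) :
    IntegrableOn (fun t => g (t - a / t)) (Ioi 0) := by
  have hψ : ContinuousOn (fun t : ℝ => t - a / t) (Ioi 0) :=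
    continuousOn_id.sub (continuousOn_const.div continuousOn_id fun t ht => ne_of_gt ht)
  refine Integrable.mono (integrableOn_one_add_div_sq_mul_comp_sub_div hg_int ha)
    ((hg.comp_continuousOn hψ).aestronglyMeasurable measurableSet_Ioi) (ae_of_all _ fun t => ?_)
  rw [norm_mul, Real.norm_eq_abs (1 + _), abs_one_add_div_sq ha.le t]
  exact le_mul_of_one_le_left (norm_nonneg _) (one_le_one_add_div_sq ha.le t)

lemma integral_Ioi_comp_sub_div_eq_integral_div_sq_mul (hg_even : ∀ u, g (-u) = g u)
    (ha : 0 < a) :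
    ∫ t in Ioi 0, g (t - a / t) = ∫ t in Ioi 0, a / t ^ 2 * g (t - a / t) := by
  have hinj : InjOn (fun t : ℝ => a / t) (Ioi 0) := fun t _ s _ h => by
    simpa [div_div_cancel₀ ha.ne'] using congrArg (a / ·) h
  conv_lhs => rw [← image_const_div_Ioi ha]
  rw [integral_image_eq_integral_abs_deriv_smul measurableSet_Ioi
    (fun t ht => (hasDerivAt_const_div a (ne_of_gt ht)).hasDerivWithinAt) hinj]
  refine setIntegral_congr_fun measurableSet_Ioi fun t (ht : 0 < t) => ?_
  have hflip : a / t - a / (a / t) = -(t - a / t) := by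
    rw [div_div_cancel₀ ha.ne']
    ring
  rw [smul_eq_mul, abs_neg, abs_of_pos (div_pos ha (pow_pos ht 2)), hflip, hg_even]

theorem integral_Ioi_comp_sub_div (hg : Continuous g) (hg_int : Integrable g)
    (hg_even : ∀ u, g (-u) = g u) (ha : 0 ≤ a) :
    ∫ t in Ioi 0, g (t - a / t) = ∫ u in Ioi 0, g u := by
  rcases ha.eq_or_lt with rfl | ha
  · simp only [zero_div, sub_zero]
  have hint := integrableOn_comp_sub_div hg hg_int ha
  have hint_w : IntegrableOn (fun t => a / t ^ 2 * g (t - a / t)) (Ioi 0) :=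
    ((integrableOn_one_add_div_sq_mul_comp_sub_div hg_int ha).sub hint).congr_fun
      (fun t _ => by simp only [Pi.sub_apply]; ring) measurableSet_Ioi
  have hdouble : ∫ u, g u = 2 * ∫ t in Ioi 0, g (t - a / t) := by
    calc ∫ u, g u = ∫ t in Ioi 0, (g (t - a / t) + a / t ^ 2 * g (t - a / t)) := by
          rw [integral_eq_integral_Ioi_one_add_div_sq_mul_comp_sub_div ha]
          congr with t
          ring
      _ = 2 * ∫ t in Ioi 0, g (t - a / t) := by
          rw [integral_add hint hint_w,
            ← integral_Ioi_comp_sub_div_eq_integral_div_sq_mul hg_even ha]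
          ring
  linarith [integral_eq_two_mul_integral_Ioi_of_even hg_even]

end CauchySchlomilch

section MaxIntegral

lemma indicator_Ioi_apply_comm (f : ℝ → ℝ) (x y : ℝ) :
    (Ioi y).indicator f x = (Iio x).indicator (fun _ => f x) y := by
  simp only [indicator_apply, mem_Ioi, mem_Iio]

lemma integrableOn_Ioi_indicator_Ioi_apply (f : ℝ → ℝ) (x : ℝ) :
    IntegrableOn (fun y => (Ioi y).indicator f x) (Ioi 0) := by
  simp only [indicator_Ioi_apply_comm f x]
  refine (integrable_indicator_iff measurableSet_Iio).2 (integrableOn_const ?_)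
  rw [Measure.restrict_apply measurableSet_Iio, Iio_inter_Ioi]
  exact measure_Ioo_lt_top.ne

lemma integral_Ioi_indicator_Ioi_apply (f : ℝ → ℝ) {x : ℝ} (hx : 0 < x) :
    ∫ y in Ioi 0, (Ioi y).indicator f x = x * f x := by
  simp only [indicator_Ioi_apply_comm f x]
  rw [integral_indicator measurableSet_Iio, Measure.restrict_restrict measurableSet_Iio,
    Iio_inter_Ioi, setIntegral_const, Real.volume_real_Ioo_of_le hx.le, sub_zero, smul_eq_mul]

lemma integral_Ioi_indicator_Ioi (f : ℝ → ℝ) {y : ℝ} (hy : 0 ≤ y) :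
    ∫ x in Ioi 0, (Ioi y).indicator f x = ∫ x in Ioi y, f x := by
  rw [integral_indicator measurableSet_Ioi, Measure.restrict_restrict measurableSet_Ioi,
    Ioi_inter_Ioi, max_eq_left hy]

variable {f : ℝ → ℝ}

lemma integrable_indicator_Ioi_prod (hf : Measurable f)
    (hint : IntegrableOn (fun x => x * f x) (Ioi 0)) :
    Integrable (fun p : ℝ × ℝ => (Ioi p.1).indicator f p.2)
      ((volume.restrict (Ioi 0)).prod (volume.restrict (Ioi 0))) := by
  have hmeas : Measurable fun p : ℝ × ℝ => (Ioi p.1).indicator f p.2 :=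
    (hf.comp measurable_snd).indicator (measurableSet_lt measurable_fst measurable_snd)
  refine (integrable_prod_iff' hmeas.aestronglyMeasurable).2
    ⟨ae_of_all _ fun x => integrableOn_Ioi_indicator_Ioi_apply f x, ?_⟩
  refine IntegrableOn.congr_fun hint.norm (fun x (hx : 0 < x) => ?_) measurableSet_Ioi
  simp only [norm_indicator_eq_indicator_norm]
  rw [integral_Ioi_indicator_Ioi_apply _ hx, norm_mul, Real.norm_of_nonneg hx.le]

lemma integrableOn_integral_Ioi (hf : Measurable f)
    (hint : IntegrableOn (fun x => x * f x) (Ioi 0)) :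
    IntegrableOn (fun y => ∫ x in Ioi y, f x) (Ioi 0) :=
  IntegrableOn.congr_fun (integrable_indicator_Ioi_prod hf hint).integral_prod_left
    (fun _ hy => integral_Ioi_indicator_Ioi f (le_of_lt hy)) measurableSet_Ioi

lemma integral_Ioi_integral_Ioi (hf : Measurable f)
    (hint : IntegrableOn (fun x => x * f x) (Ioi 0)) :
    ∫ y in Ioi 0, ∫ x in Ioi y, f x = ∫ x in Ioi 0, x * f x := by
  rw [← setIntegral_congr_fun measurableSet_Ioi fun y (hy : 0 < y) =>
      integral_Ioi_indicator_Ioi f hy.le,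
    integral_integral_swap (integrable_indicator_Ioi_prod hf hint)]
  exact setIntegral_congr_fun measurableSet_Ioi fun x hx => integral_Ioi_indicator_Ioi_apply f hx

lemma integrableOn_Ioi_of_integrableOn_mul (hf : Measurable f)
    (hint : IntegrableOn (fun x => x * f x) (Ioi 0)) {y : ℝ} (hy : 0 < y) :
    IntegrableOn f (Ioi y) := by
  refine Integrable.mono ((hint.mono_set (Ioi_subset_Ioi hy.le)).div_const y)
    hf.aestronglyMeasurable ?_
  filter_upwards [ae_restrict_mem measurableSet_Ioi] with x (hx : y < x)
  rw [norm_div, norm_mul, Real.norm_of_nonneg hy.le, Real.norm_of_nonneg (hy.trans hx).le,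
    le_div_iff₀ hy, mul_comm]
  exact mul_le_mul_of_nonneg_right hx.le (norm_nonneg (f x))

lemma integral_Ioi_comp_max (hf : Measurable f)
    (hint : IntegrableOn (fun x => x * f x) (Ioi 0)) {y : ℝ} (hy : 0 < y) :
    ∫ x in Ioi 0, f (max x y) = y * f y + ∫ x in Ioi y, f x := by
  have hbelow : EqOn (fun x => f (max x y)) (fun _ => f y) (Ioc 0 y) := fun x hx => by
    simp only [max_eq_right hx.2]
  have habove : EqOn (fun x => f (max x y)) f (Ioi y) := fun x hx => by
    simp only [max_eq_left (le_of_lt (mem_Ioi.1 hx))]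
  rw [← Ioc_union_Ioi_eq_Ioi hy.le, setIntegral_union (Ioc_disjoint_Ioi le_rfl) measurableSet_Ioi
      ((integrableOn_const measure_Ioc_lt_top.ne).congr_fun hbelow.symm measurableSet_Ioc)
      ((integrableOn_Ioi_of_integrableOn_mul hf hint hy).congr_fun habove.symm measurableSet_Ioi),
    setIntegral_congr_fun measurableSet_Ioc hbelow, setIntegral_congr_fun measurableSet_Ioi habove,
    setIntegral_const, Real.volume_real_Ioc_of_le hy.le, sub_zero, smul_eq_mul]

theorem integral_Ioi_integral_Ioi_comp_max (hf : Measurable f)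
    (hint : IntegrableOn (fun x => x * f x) (Ioi 0)) :
    ∫ y in Ioi 0, ∫ x in Ioi 0, f (max x y) = 2 * ∫ x in Ioi 0, x * f x := by
  rw [setIntegral_congr_fun measurableSet_Ioi fun y hy => integral_Ioi_comp_max hf hint hy,
    integral_add hint (integrableOn_integral_Ioi hf hint), integral_Ioi_integral_Ioi hf hint]
  ring

end MaxIntegral

section EnvelopeDensity

variable {c : ℝ}

noncomputable def hatSq (t h₁ h₂ : ℝ) : ℝ :=
  1 / 4 * (t ^ 2 + 2 * (h₁ ^ 2 + h₂ ^ 2) + (h₂ ^ 2 - h₁ ^ 2) ^ 2 / t ^ 2)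

lemma hatSq_eq {t h₁ h₂ : ℝ} (ht : t ≠ 0) (hh₁ : 0 ≤ h₁) (hh₂ : 0 ≤ h₂) :
    hatSq t h₁ h₂ = (t - |h₂ ^ 2 - h₁ ^ 2| / t) ^ 2 / 4 + max h₁ h₂ ^ 2 := by
  rw [hatSq]
  rcases le_total h₁ h₂ with h | h
  · rw [abs_of_nonneg (by nlinarith), max_eq_right h]
    field_simp
    ring
  · rw [abs_of_nonpos (by nlinarith), max_eq_left h]
    field_simp
    ring

/-- `c ĥ² e^{-c ĥ²}` (with `c = λπ`) in the variables `m = max h₁ h₂` and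
`u = t - |h₂² - h₁²|/t`, in which `ĥ² = u²/4 + m²`. -/
noncomputable def envelopeDensity (c m u : ℝ) : ℝ :=
  c * (u ^ 2 / 4 + m ^ 2) * exp (-(c * (u ^ 2 / 4 + m ^ 2)))

lemma continuous_envelopeDensity (c m : ℝ) : Continuous (envelopeDensity c m) := by
  unfold envelopeDensity
  fun_prop

lemma envelopeDensity_neg (c m u : ℝ) : envelopeDensity c m (-u) = envelopeDensity c m u := by
  simp only [envelopeDensity, neg_sq]

lemma envelopeDensity_eq (c m u : ℝ) :
    envelopeDensity c m u = exp (-(c * m ^ 2)) *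
      (c / 4 * (u ^ 2 * exp (-(c / 4) * u ^ 2)) + c * m ^ 2 * exp (-(c / 4) * u ^ 2)) := by
  rw [envelopeDensity, show -(c * (u ^ 2 / 4 + m ^ 2)) = -(c * m ^ 2) + -(c / 4) * u ^ 2 by ring,
    exp_add]
  ring

lemma integrable_envelopeDensity (hc : 0 < c) (m : ℝ) : Integrable (envelopeDensity c m) := by
  have hc4 : 0 < c / 4 := by positivity
  have hsq : Integrable fun u : ℝ => u ^ 2 * exp (-(c / 4) * u ^ 2) := by
    simpa only [rpow_two] using integrable_rpow_mul_exp_neg_mul_sq hc4 (by norm_num : (-1:ℝ) < 2)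
  rw [funext (envelopeDensity_eq c m)]
  exact ((hsq.const_mul _).add ((integrable_exp_neg_mul_sq hc4).const_mul _)).const_mul _

noncomputable def envelopeMarginal (c m : ℝ) : ℝ :=
  √π / 2 * exp (-(c * m ^ 2)) * (1 / √c + 2 * m ^ 2 * √c)

lemma integral_Ioi_envelopeDensity (hc : 0 < c) (m : ℝ) :
    ∫ u in Ioi 0, envelopeDensity c m u = envelopeMarginal c m := by
  have hc4 : 0 < c / 4 := by positivity
  have hsqrt : √(c / 4) = √c / 2 := by
    rw [sqrt_div' c (by norm_num : (0:ℝ) ≤ 4), show (4:ℝ) = 2 ^ 2 by norm_num,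
      sqrt_sq (by norm_num : (0:ℝ) ≤ 2)]
  simp only [envelopeDensity_eq]
  rw [integral_const_mul, integral_add
      ((integrableOn_Ioi_pow_mul_exp_neg_mul_sq hc4 2).const_mul _)
      ((integrable_exp_neg_mul_sq hc4).integrableOn.const_mul _),
    integral_const_mul, integral_const_mul, integral_Ioi_sq_mul_exp_neg_mul_sq hc4,
    integral_gaussian_Ioi, sqrt_div pi_pos.le, hsqrt, envelopeMarginal]
  have hs2 : √c ^ 2 = c := sq_sqrt hc.le
  field_simp
  rw [hs2]
  ring

lemma continuous_envelopeMarginal (c : ℝ) : Continuous (envelopeMarginal c) := by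
  unfold envelopeMarginal
  fun_prop

lemma mul_envelopeMarginal_eq (c m : ℝ) :
    m * envelopeMarginal c m =
      √π / (2 * √c) * (m * exp (-c * m ^ 2)) + √π * √c * (m ^ 3 * exp (-c * m ^ 2)) := by
  rw [envelopeMarginal, neg_mul]
  ring

lemma integrableOn_mul_envelopeMarginal (hc : 0 < c) :
    IntegrableOn (fun m => m * envelopeMarginal c m) (Ioi 0) := by
  simp only [mul_envelopeMarginal_eq]
  exact ((integrable_mul_exp_neg_mul_sq hc).integrableOn.const_mul _).add
    ((integrableOn_Ioi_pow_mul_exp_neg_mul_sq hc 3).const_mul _)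

lemma integral_Ioi_mul_envelopeMarginal (hc : 0 < c) :
    ∫ m in Ioi 0, m * envelopeMarginal c m = 3 * √π / (4 * c * √c) := by
  simp only [mul_envelopeMarginal_eq]
  rw [integral_add ((integrable_mul_exp_neg_mul_sq hc).integrableOn.const_mul _)
      ((integrableOn_Ioi_pow_mul_exp_neg_mul_sq hc 3).const_mul _),
    integral_const_mul, integral_const_mul, integral_Ioi_mul_exp_neg_mul_sq hc,
    integral_Ioi_pow_three_mul_exp_neg_mul_sq hc]
  have hs2 : √c ^ 2 = c := sq_sqrt hc.le
  field_simp
  linear_combination 8 * hs2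

lemma integral_Ioi_hatSq_density (hc : 0 < c) {h₁ h₂ : ℝ} (hh₁ : 0 ≤ h₁) (hh₂ : 0 ≤ h₂) :
    ∫ t in Ioi 0, c * hatSq t h₁ h₂ * exp (-(c * hatSq t h₁ h₂)) =
      envelopeMarginal c (max h₁ h₂) := by
  have hsubst : ∀ t ∈ Ioi (0:ℝ), c * hatSq t h₁ h₂ * exp (-(c * hatSq t h₁ h₂)) =
      envelopeDensity c (max h₁ h₂) (t - |h₂ ^ 2 - h₁ ^ 2| / t) := fun t ht => by
    rw [hatSq_eq (ne_of_gt ht) hh₁ hh₂, envelopeDensity]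
  rw [setIntegral_congr_fun measurableSet_Ioi hsubst,
    integral_Ioi_comp_sub_div (continuous_envelopeDensity c _) (integrable_envelopeDensity hc _)
      (envelopeDensity_neg c _) (abs_nonneg _),
    integral_Ioi_envelopeDensity hc]

theorem integral_Ioi_Ioi_Ioi_hatSq_density (hc : 0 < c) :
    ∫ h₂ in Ioi 0, ∫ h₁ in Ioi 0, ∫ t in Ioi 0, c * hatSq t h₁ h₂ * exp (-(c * hatSq t h₁ h₂)) =
      3 * √π / (2 * c * √c) := by
  calc _ = ∫ h₂ in Ioi 0, ∫ h₁ in Ioi 0, envelopeMarginal c (max h₁ h₂) :=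
        setIntegral_congr_fun measurableSet_Ioi fun h₂ hh₂ =>
          setIntegral_congr_fun measurableSet_Ioi fun h₁ hh₁ =>
            integral_Ioi_hatSq_density hc (le_of_lt hh₁) (le_of_lt hh₂)
    _ = 2 * ∫ m in Ioi 0, m * envelopeMarginal c m :=
        integral_Ioi_integral_Ioi_comp_max (continuous_envelopeMarginal c).measurable
          (integrableOn_mul_envelopeMarginal hc)
    _ = 3 * √π / (2 * c * √c) := by
        rw [integral_Ioi_mul_envelopeMarginal hc]
        ring

end EnvelopeDensity

/-- For all `λ > 0`,
`4λ² ∫₀^∞∫₀^∞∫₀^∞ λπ ĥ(t,h₁,h₂)² e^{−λπ ĥ(t,h₁,h₂)²} dt dh₁ dh₂ = 6√λ/π`, where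
`ĥ(t,h₁,h₂)² = (1/4)[t² + 2(h₁² + h₂²) + (h₂² − h₁²)²/t²]`.  This triple integral is the
intensity of the tropical-interference handover point process, i.e. the handover frequency
in the 2-Voronoi tessellation of a planar Poisson point process of intensity `λ`. -/
theorem stmt_7 (lam : ℝ) (hlam : 0 < lam) :
    4 * lam ^ 2 *
        ∫ h₂ in Ioi (0:ℝ), ∫ h₁ in Ioi (0:ℝ), ∫ t in Ioi (0:ℝ),
          lam * Real.pi *
              (1/4 * (t ^ 2 + 2 * (h₁ ^ 2 + h₂ ^ 2) + (h₂ ^ 2 - h₁ ^ 2) ^ 2 / t ^ 2)) *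
            Real.exp (-(lam * Real.pi *
              (1/4 * (t ^ 2 + 2 * (h₁ ^ 2 + h₂ ^ 2) + (h₂ ^ 2 - h₁ ^ 2) ^ 2 / t ^ 2)))) =
      6 * Real.sqrt lam / Real.pi := by
  have h := integral_Ioi_Ioi_Ioi_hatSq_density (mul_pos hlam pi_pos)
  simp only [hatSq] at h
  rw [h, sqrt_mul hlam.le]
  have hl2 : √lam ^ 2 = lam := sq_sqrt hlam.le
  field_simp
  linear_combination (-12) * hl2
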